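/- If P = {a, b} consists of exactly two points in ℝ^d, then the nearest-neighbor geodesic distance between them equals the squared Euclidean distance: d_N(a,b) = ‖a − b‖². -/

import Mathlib

/-!
Let `K = ‖b - a‖` and let `s(z)` be the coordinate of `z` along the unit vector from `a` to `b`,
measured from `a`. The distance to `{a, b}` dominates the tent profile `min |s| |s - K|`, so the
potential `Φ(z) = ∫₀^{s(z)} min |x| |x - K| dx` has gradient bounded by `r_P`. Along any path
from `a` to `b`, `Φ` therefore grows by at most the nearest-neighbor length, which gives the lower
bound `Φ(b) - Φ(a) = K² / 4`. The straight segment attains it, because on the segment `r_P` is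
exactly the tent profile.
-/

open scoped BigOperators
open MeasureTheory

noncomputable section

/-- Points of `ℝ^d`. -/
abbrev Pt (d : ℕ) : Type := EuclideanSpace ℝ (Fin d)

/-- The edge-squared metric on a point set `P ⊆ ℝ^d`: the infimum over finite chains of points
of `P` from `a` to `b` of the sum of squared Euclidean lengths of the steps. -/
noncomputable def edgeSq {d : ℕ} (P : Set (Pt d)) (a b : Pt d) : ℝ :=
  sInf {c : ℝ | ∃ (k : ℕ) (p : Fin (k + 1) → Pt d), p 0 = a ∧ p (Fin.last k) = b ∧
    (∀ i, p i ∈ P) ∧ c = ∑ i : Fin k, ‖p i.succ - p i.castSucc‖ ^ 2}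

/-- A path `γ : [0,1] → ℝ^d` is piecewise-C¹ if it is continuous on `[0,1]` and there is a
partition `0 = t₀ < t₁ < ⋯ < t_m = 1` such that `γ` is `C¹` on each subinterval. -/
def PiecewiseC1 {d : ℕ} (γ : ℝ → Pt d) : Prop :=
  ContinuousOn γ (Set.Icc 0 1) ∧
  ∃ (m : ℕ) (t : Fin (m + 1) → ℝ), StrictMono t ∧ t 0 = 0 ∧ t (Fin.last m) = 1 ∧
    ∀ i : Fin m, ContDiffOn ℝ 1 γ (Set.Icc (t i.castSucc) (t i.succ))

/-- The nearest-neighbor length of a path: `ℓ(γ) = ∫₀¹ r_P(γ(t)) ‖γ'(t)‖ dt`, where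
`r_P(z) = min_{x ∈ P} ‖x - z‖` is the distance to the nearest point of `P`. -/
noncomputable def nnLength {d : ℕ} (P : Set (Pt d)) (γ : ℝ → Pt d) : ℝ :=
  ∫ t in (0:ℝ)..1, Metric.infDist (γ t) P * ‖deriv γ t‖

/-- The nearest-neighbor geodesic distance:
`d_N(a,b) = 4 ⬝ inf { ℓ(γ) | γ piecewise-C¹ path from a to b }`. -/
noncomputable def nnGeo {d : ℕ} (P : Set (Pt d)) (a b : Pt d) : ℝ :=
  4 * sInf {l : ℝ | ∃ γ : ℝ → Pt d, PiecewiseC1 γ ∧ γ 0 = a ∧ γ 1 = b ∧ l = nnLength P γ}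

open Set

def tent (c x : ℝ) : ℝ := min |x| |x - c|

theorem continuous_tent (c : ℝ) : Continuous (tent c) := by
  unfold tent
  fun_prop

theorem tent_nonneg (c x : ℝ) : 0 ≤ tent c x :=
  le_min (abs_nonneg _) (abs_nonneg _)

theorem integral_tent {c : ℝ} (hc : 0 ≤ c) : ∫ x in (0 : ℝ)..c, tent c x = c ^ 2 / 4 := by
  have hint : ∀ x y : ℝ, IntervalIntegrable (tent c) volume x y :=
    (continuous_tent c).intervalIntegrable
  have h_left : ∫ x in (0 : ℝ)..c / 2, tent c x = ∫ x in (0 : ℝ)..c / 2, x := by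
    refine intervalIntegral.integral_congr fun x hx => ?_
    rw [uIcc_of_le (by linarith)] at hx
    simp only [tent]
    rw [abs_of_nonneg hx.1, abs_of_nonpos (by linarith [hx.2]), min_eq_left (by linarith [hx.2])]
  have h_right : ∫ x in c / 2..c, tent c x = ∫ x in c / 2..c, (c - x) := by
    refine intervalIntegral.integral_congr fun x hx => ?_
    rw [uIcc_of_le (by linarith)] at hx
    simp only [tent]
    rw [abs_of_nonneg (by linarith [hx.1]), abs_of_nonpos (by linarith [hx.2]),
      min_eq_right (by linarith [hx.1])]
    ring
  rw [← intervalIntegral.integral_add_adjacent_intervals (hint 0 (c / 2)) (hint (c / 2) c),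
    h_left, h_right, intervalIntegral.integral_sub intervalIntegrable_const
      intervalIntegral.intervalIntegrable_id, integral_id, integral_id,
    intervalIntegral.integral_const, smul_eq_mul]
  ring

theorem Metric.infDist_pair {α : Type*} [PseudoMetricSpace α] (z x y : α) :
    Metric.infDist z {x, y} = min (dist z x) (dist z y) := by
  refine le_antisymm
    (le_min (Metric.infDist_le_dist_of_mem (by simp)) (Metric.infDist_le_dist_of_mem (by simp))) ?_
  refine (Metric.le_infDist ⟨x, by simp⟩).2 fun w hw => ?_
  rcases hw with rfl | rfl
  · exact min_le_left _ _
  · exact min_le_right _ _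

section WeightedLength

variable {E : Type*} [NormedAddCommGroup E] [NormedSpace ℝ E]

theorem ContDiffOn.integrableOn_mul_norm_deriv {ρ : E → ℝ} (hρ : Continuous ρ) {γ : ℝ → E}
    {u v : ℝ} (huv : u < v) (hγ : ContDiffOn ℝ 1 γ (Icc u v)) :
    IntegrableOn (fun t => ρ (γ t) * ‖deriv γ t‖) (Icc u v) := by
  have hcont : ContinuousOn (fun t => ρ (γ t) * ‖derivWithin γ (Icc u v) t‖) (Icc u v) :=
    (hρ.comp_continuousOn hγ.continuousOn).mul
      (hγ.continuousOn_derivWithin (uniqueDiffOn_Icc huv) le_rfl).norm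
  rw [integrableOn_Icc_iff_integrableOn_Ioo]
  refine (hcont.integrableOn_Icc.mono_set Ioo_subset_Icc_self).congr_fun
    (fun t ht => ?_) measurableSet_Ioo
  simp only [derivWithin_of_mem_nhds (Icc_mem_nhds ht.1 ht.2)]

theorem ContDiffOn.sub_le_integral_mul_norm_deriv {Φ ρ : E → ℝ} {Φ' : E → E →L[ℝ] ℝ}
    (hΦ : ∀ z, HasFDerivAt Φ (Φ' z) z) (hΦρ : ∀ z, ‖Φ' z‖ ≤ ρ z) (hρ : Continuous ρ)
    {γ : ℝ → E} {u v : ℝ} (huv : u < v) (hγ : ContDiffOn ℝ 1 γ (Icc u v)) :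
    Φ (γ v) - Φ (γ u) ≤ ∫ t in u..v, ρ (γ t) * ‖deriv γ t‖ := by
  have hderiv : ∀ t ∈ Ioo u v, HasDerivAt γ (deriv γ t) t := fun t ht =>
    ((hγ.differentiableOn one_ne_zero t (Ioo_subset_Icc_self ht)).differentiableAt
      (Icc_mem_nhds ht.1 ht.2)).hasDerivAt
  have hΦcont : Continuous Φ := continuous_iff_continuousAt.2 fun z => (hΦ z).continuousAt
  refine intervalIntegral.sub_le_integral_of_hasDeriv_right_of_le huv.le
    (hΦcont.comp_continuousOn hγ.continuousOn)
    (fun t ht => ((hΦ (γ t)).comp_hasDerivAt t (hderiv t ht)).hasDerivWithinAt)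
    (hγ.integrableOn_mul_norm_deriv hρ huv) (fun t _ => ?_)
  calc Φ' (γ t) (deriv γ t) ≤ ‖Φ' (γ t)‖ * ‖deriv γ t‖ :=
        (le_abs_self _).trans ((Φ' (γ t)).le_opNorm _)
    _ ≤ ρ (γ t) * ‖deriv γ t‖ := by gcongr; exact hΦρ _

end WeightedLength

theorem PiecewiseC1.sub_le_integral_mul_norm_deriv {d : ℕ} {Φ ρ : Pt d → ℝ}
    {Φ' : Pt d → Pt d →L[ℝ] ℝ} (hΦ : ∀ z, HasFDerivAt Φ (Φ' z) z) (hΦρ : ∀ z, ‖Φ' z‖ ≤ ρ z)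
    (hρ : Continuous ρ) {γ : ℝ → Pt d} (hγ : PiecewiseC1 γ) :
    Φ (γ 1) - Φ (γ 0) ≤ ∫ t in (0 : ℝ)..1, ρ (γ t) * ‖deriv γ t‖ := by
  obtain ⟨-, m, t, ht_mono, ht_zero, ht_last, hC⟩ := hγ
  -- the partition as an `ℕ`-indexed sequence, as the summation lemmas expect
  set s : ℕ → ℝ := fun k => t ⟨min k m, by omega⟩
  have hs : ∀ k (hk : k < m), s k = t (Fin.castSucc ⟨k, hk⟩) ∧ s (k + 1) = t (Fin.succ ⟨k, hk⟩) :=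
    fun k hk => ⟨congrArg t (Fin.ext (min_eq_left hk.le)), congrArg t (Fin.ext (min_eq_left hk))⟩
  have hpiece : ∀ k < m, s k < s (k + 1) ∧ ContDiffOn ℝ 1 γ (Icc (s k) (s (k + 1))) := by
    intro k hk
    rw [(hs k hk).1, (hs k hk).2]
    exact ⟨ht_mono Fin.castSucc_lt_succ, hC _⟩
  have hs_zero : s 0 = 0 := ht_zero
  have hs_last : s m = 1 := by rw [← ht_last]; exact congrArg t (Fin.ext (min_self m))
  calc Φ (γ 1) - Φ (γ 0) = ∑ k ∈ Finset.range m, (Φ (γ (s (k + 1))) - Φ (γ (s k))) := by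
        rw [Finset.sum_range_sub (fun k => Φ (γ (s k))), hs_zero, hs_last]
    _ ≤ ∑ k ∈ Finset.range m, ∫ t in s k..s (k + 1), ρ (γ t) * ‖deriv γ t‖ :=
        Finset.sum_le_sum fun k hk => (hpiece k (Finset.mem_range.1 hk)).2
          |>.sub_le_integral_mul_norm_deriv hΦ hΦρ hρ (hpiece k (Finset.mem_range.1 hk)).1
    _ = ∫ t in (0 : ℝ)..1, ρ (γ t) * ‖deriv γ t‖ := by
        rw [intervalIntegral.sum_integral_adjacent_intervals fun k hk =>
          (intervalIntegrable_iff_integrableOn_Icc_of_le (hpiece k hk).1.le).2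
            ((hpiece k hk).2.integrableOn_mul_norm_deriv hρ (hpiece k hk).1), hs_zero, hs_last]

section SegmentPotential

variable {E : Type*} [NormedAddCommGroup E] [InnerProductSpace ℝ E]

-- vanishes when `a = b`, since `0⁻¹ = 0`
def segmentCoord (a b : E) : E →L[ℝ] ℝ := ‖b - a‖⁻¹ • innerSL ℝ (b - a)

theorem norm_segmentCoord_le (a b : E) : ‖segmentCoord a b‖ ≤ 1 := by
  rw [segmentCoord, norm_smul, innerSL_apply_norm, norm_inv, norm_norm, inv_mul_eq_div]
  exact div_self_le_one _

theorem segmentCoord_sub (a b : E) : segmentCoord a b (b - a) = ‖b - a‖ := by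
  change ‖b - a‖⁻¹ * inner ℝ (b - a) (b - a) = ‖b - a‖
  rw [real_inner_self_eq_norm_sq]
  rcases eq_or_ne ‖b - a‖ 0 with h | h
  · simp [h]
  · field_simp

theorem tent_segmentCoord_le_infDist (a b z : E) :
    tent ‖b - a‖ (segmentCoord a b (z - a)) ≤ Metric.infDist z {a, b} := by
  have hcoord : ∀ w : E, |segmentCoord a b w| ≤ ‖w‖ := fun w =>
    ((segmentCoord a b).le_opNorm w).trans (mul_le_of_le_one_left (norm_nonneg w)
      (norm_segmentCoord_le a b))
  have hshift : segmentCoord a b (z - a) - ‖b - a‖ = segmentCoord a b (z - b) := by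
    rw [← segmentCoord_sub, ← map_sub, sub_sub_sub_cancel_right]
  rw [Metric.infDist_pair, dist_eq_norm, dist_eq_norm]
  exact min_le_min (hcoord _) (hshift ▸ hcoord _)

theorem norm_tent_smul_segmentCoord_le_infDist (a b z : E) :
    ‖tent ‖b - a‖ (segmentCoord a b (z - a)) • segmentCoord a b‖ ≤ Metric.infDist z {a, b} := by
  rw [norm_smul, Real.norm_of_nonneg (tent_nonneg _ _)]
  exact (mul_le_of_le_one_right (tent_nonneg _ _) (norm_segmentCoord_le a b)).trans
    (tent_segmentCoord_le_infDist a b z)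

def segmentPotential (a b z : E) : ℝ :=
  ∫ x in (0 : ℝ)..segmentCoord a b (z - a), tent ‖b - a‖ x

theorem hasFDerivAt_segmentPotential (a b z : E) :
    HasFDerivAt (segmentPotential a b)
      (tent ‖b - a‖ (segmentCoord a b (z - a)) • segmentCoord a b) z := by
  have hprim : HasDerivAt (fun y => ∫ x in (0 : ℝ)..y, tent ‖b - a‖ x)
      (tent ‖b - a‖ (segmentCoord a b (z - a))) (segmentCoord a b (z - a)) :=
    (continuous_tent _).integral_hasStrictDerivAt 0 _ |>.hasDerivAt
  have hcoord : HasFDerivAt (fun z => segmentCoord a b (z - a)) (segmentCoord a b) z := by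
    simpa only [map_sub] using (segmentCoord a b).hasFDerivAt.sub_const (segmentCoord a b a)
  exact hprim.comp_hasFDerivAt z hcoord

theorem segmentPotential_right_sub_left (a b : E) :
    segmentPotential a b b - segmentPotential a b a = ‖b - a‖ ^ 2 / 4 := by
  simp [segmentPotential, segmentCoord_sub, integral_tent (norm_nonneg _)]

end SegmentPotential

theorem piecewiseC1_lineMap {d : ℕ} (a b : Pt d) : PiecewiseC1 (AffineMap.lineMap a b) :=
  ⟨AffineMap.lineMap_continuous.continuousOn, 1, ![0, 1], fun i j hij => by
    fin_cases i <;> fin_cases j <;> simp_all, rfl, rfl,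
    fun _ => (AffineMap.contDiff_lineMap a b).contDiffOn⟩

theorem nnLength_pair_lineMap {d : ℕ} (a b : Pt d) :
    nnLength {a, b} (AffineMap.lineMap a b) = ‖b - a‖ ^ 2 / 4 := by
  have hweight : ∀ u : ℝ, Metric.infDist (AffineMap.lineMap a b u) {a, b} =
      tent ‖b - a‖ (u * ‖b - a‖) := fun u => by
    rw [Metric.infDist_pair, dist_lineMap_left, dist_lineMap_right, tent, dist_eq_norm',
      abs_mul, abs_norm, ← sub_one_mul, abs_mul, abs_norm, abs_sub_comm, Real.norm_eq_abs,
      Real.norm_eq_abs]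
  simp only [nnLength, hweight, AffineMap.hasDerivAt_lineMap.deriv]
  rw [intervalIntegral.integral_mul_const, mul_comm, ← smul_eq_mul,
    intervalIntegral.smul_integral_comp_mul_right, zero_mul, one_mul,
    integral_tent (norm_nonneg _)]

theorem PiecewiseC1.norm_sub_sq_div_four_le_nnLength {d : ℕ} {γ : ℝ → Pt d}
    (hγ : PiecewiseC1 γ) :
    ‖γ 1 - γ 0‖ ^ 2 / 4 ≤ nnLength {γ 0, γ 1} γ := by
  rw [← segmentPotential_right_sub_left (γ 0) (γ 1)]
  exact hγ.sub_le_integral_mul_norm_deriv (hasFDerivAt_segmentPotential _ _)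
    (norm_tent_smul_segmentCoord_le_infDist _ _) (Metric.continuous_infDist_pt _)

theorem nnGeo_pair (d : ℕ) (a b : Pt d) :
    nnGeo ({a, b} : Set (Pt d)) a b = ‖a - b‖ ^ 2 := by
  have hleast : IsLeast {l : ℝ | ∃ γ : ℝ → Pt d, PiecewiseC1 γ ∧ γ 0 = a ∧ γ 1 = b ∧
      l = nnLength {a, b} γ} (‖b - a‖ ^ 2 / 4) := by
    refine ⟨⟨AffineMap.lineMap a b, piecewiseC1_lineMap a b, AffineMap.lineMap_apply_zero a b,
      AffineMap.lineMap_apply_one a b, (nnLength_pair_lineMap a b).symm⟩, ?_⟩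
    rintro _ ⟨γ, hγ, rfl, rfl, rfl⟩
    exact hγ.norm_sub_sq_div_four_le_nnLength
  rw [nnGeo, hleast.csInf_eq, norm_sub_rev]
  ring
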